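/- arXiv:2408.06860 — 10 statements merged into one kernel-verified Lean document; each statement's English description precedes it below -/
import Mathlib

section
/- Define P₁ = EK₋₁ and Q₁ = K₁F in the algebra E, and recursively Pᵢ = K₁P_{i−1}K₋₁ − EP_{i−1}F, Qᵢ = K₁Q_{i−1}K₋₁ − EQ_{i−1}F for i > 1. Then {Pᵢ, Pⱼ} = 0 for all i, j ≥ 1, where {a,b} = ab + ba denotes the anticommutator. -/
/-- `Pseq K1 Km1 E F i` is the element Pᵢ of the algebra 𝓔:
P₁ = EK₋₁ and Pᵢ = K₁P_{i−1}K₋₁ − EP_{i−1}F for i > 1 (P₀ := 0). -/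
def Pseq {A : Type*} [Ring A] (K1 Km1 E F : A) : ℕ → A
  | 0 => 0
  | 1 => E * Km1
  | (n + 2) => K1 * Pseq K1 Km1 E F (n + 1) * Km1 - E * Pseq K1 Km1 E F (n + 1) * F

/- With Pᵢ as above, in any ℚ-algebra with elements K₁ (`K1`), K₋₁ (`Km1`), E, F
satisfying K₋₁K₁ = FE = 1, K₋₁E = FK₁ = 0, K₁K₋₁ + EF = 1, one has the
anticommutator relation {Pᵢ, Pⱼ} = PᵢPⱼ + PⱼPᵢ = 0 for all i, j ≥ 1. -/
theorem stmt3 {A : Type*} [Ring A] [Algebra ℚ A] (K1 Km1 E F : A)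
    (h1 : Km1 * K1 = 1) (h2 : F * E = 1) (h3 : Km1 * E = 0) (h4 : F * K1 = 0)
    (h5 : K1 * Km1 + E * F = 1) :
    ∀ i j : ℕ, 1 ≤ i → 1 ≤ j →
      Pseq K1 Km1 E F i * Pseq K1 Km1 E F j + Pseq K1 Km1 E F j * Pseq K1 Km1 E F i = 0 := by
  have h1' : ∀ y : A, Km1 * (K1 * y) = y := fun y => by rw [← mul_assoc, h1, one_mul]
  have h2' : ∀ y : A, F * (E * y) = y := fun y => by rw [← mul_assoc, h2, one_mul]
  have h3' : ∀ y : A, Km1 * (E * y) = 0 := fun y => by rw [← mul_assoc, h3, zero_mul]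
  have h4' : ∀ y : A, F * (K1 * y) = 0 := fun y => by rw [← mul_assoc, h4, zero_mul]
  -- P₁ anticommutes with δ(x) = K1 x Km1 - E x F for every x
  have key1 : ∀ x : A,
      (E * Km1) * (K1 * x * Km1 - E * x * F) + (K1 * x * Km1 - E * x * F) * (E * Km1) = 0 := by
    intro x
    simp only [mul_sub, sub_mul, mul_assoc, h1', h2', h3', h4', mul_zero, zero_mul,
      sub_zero, zero_sub]
    abel
  -- δ(x) δ(y) = K1 (x y) Km1 + E (x y) F
  have key2 : ∀ x y : A,
      (K1 * x * Km1 - E * x * F) * (K1 * y * Km1 - E * y * F)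
        = K1 * (x * y) * Km1 + E * (x * y) * F := by
    intro x y
    simp only [mul_sub, sub_mul, mul_assoc, h1', h2', h3', h4', mul_zero, zero_mul,
      sub_zero, zero_sub]
    abel
  have hP : ∀ k, Pseq K1 Km1 E F (k + 2)
      = K1 * Pseq K1 Km1 E F (k + 1) * Km1 - E * Pseq K1 Km1 E F (k + 1) * F := fun _ => rfl
  have main : ∀ i j : ℕ,
      Pseq K1 Km1 E F (i + 1) * Pseq K1 Km1 E F (j + 1)
        + Pseq K1 Km1 E F (j + 1) * Pseq K1 Km1 E F (i + 1) = 0 := by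
    intro i
    induction i with
    | zero =>
      intro j
      cases j with
      | zero =>
        have : Pseq K1 Km1 E F 1 * Pseq K1 Km1 E F 1 = 0 := by
          show (E * Km1) * (E * Km1) = 0
          rw [mul_assoc, h3', mul_zero]
        rw [this, add_zero]
      | succ n =>
        rw [hP n]
        exact key1 _
    | succ m ih =>
      intro j
      cases j with
      | zero =>
        rw [hP m, add_comm]
        exact key1 _
      | succ n =>
        rw [hP m, hP n, key2, key2]
        have hba : Pseq K1 Km1 E F (n + 1) * Pseq K1 Km1 E F (m + 1)
            = -(Pseq K1 Km1 E F (m + 1) * Pseq K1 Km1 E F (n + 1)) :=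
          eq_neg_of_add_eq_zero_left (by rw [add_comm]; exact ih n)
        rw [hba]
        simp only [mul_neg, neg_mul]
        abel
  intro i j hi hj
  obtain ⟨i', rfl⟩ := Nat.exists_eq_add_of_le hi
  obtain ⟨j', rfl⟩ := Nat.exists_eq_add_of_le hj
  rw [add_comm 1 i', add_comm 1 j']
  exact main i' j'
end

section
/- With Pᵢ, Qᵢ defined as above in the algebra E, the anticommutator {Pᵢ, Qⱼ} = PᵢQⱼ + QⱼPᵢ equals δᵢⱼ · 1 for all i, j ≥ 1. -/
/-- `Qseq K1 Km1 E F i` is the element Qᵢ of the algebra 𝓔: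
Q₁ = K₁F and Qᵢ = K₁Q_{i−1}K₋₁ − EQ_{i−1}F for i > 1 (Q₀ := 0). -/
def Qseq {A : Type*} [Ring A] (K1 Km1 E F : A) : ℕ → A
  | 0 => 0
  | 1 => K1 * F
  | (n + 2) => K1 * Qseq K1 Km1 E F (n + 1) * Km1 - E * Qseq K1 Km1 E F (n + 1) * F

/- With Pᵢ, Qᵢ as above, in any ℚ-algebra with elements K₁ (`K1`), K₋₁ (`Km1`), E, F
satisfying K₋₁K₁ = FE = 1, K₋₁E = FK₁ = 0, K₁K₋₁ + EF = 1, the anticommutator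
{Pᵢ, Qⱼ} = PᵢQⱼ + QⱼPᵢ equals δᵢⱼ · 1 for all i, j ≥ 1. -/
theorem stmt4 {A : Type*} [Ring A] [Algebra ℚ A] (K1 Km1 E F : A)
    (h1 : Km1 * K1 = 1) (h2 : F * E = 1) (h3 : Km1 * E = 0) (h4 : F * K1 = 0)
    (h5 : K1 * Km1 + E * F = 1) :
    ∀ i j : ℕ, 1 ≤ i → 1 ≤ j →
      Pseq K1 Km1 E F i * Qseq K1 Km1 E F j + Qseq K1 Km1 E F j * Pseq K1 Km1 E F i
        = if i = j then (1 : A) else 0 := by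
  have h1' : ∀ x : A, Km1 * (K1 * x) = x := by
    intro x
    rw [← mul_assoc, h1, one_mul]
  have h2' : ∀ x : A, F * (E * x) = x := by
    intro x
    rw [← mul_assoc, h2, one_mul]
  have h3' : ∀ x : A, Km1 * (E * x) = 0 := by
    intro x
    rw [← mul_assoc, h3, zero_mul]
  have h4' : ∀ x : A, F * (K1 * x) = 0 := by
    intro x
    rw [← mul_assoc, h4, zero_mul]
  have key : ∀ X Y : A, (K1 * X * Km1 - E * X * F) * (K1 * Y * Km1 - E * Y * F)
      = K1 * (X * Y) * Km1 + E * (X * Y) * F := by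
    intro X Y
    simp [mul_sub, sub_mul, mul_assoc, h1', h2', h3', h4']
  suffices h : ∀ i j : ℕ,
      Pseq K1 Km1 E F (i + 1) * Qseq K1 Km1 E F (j + 1)
        + Qseq K1 Km1 E F (j + 1) * Pseq K1 Km1 E F (i + 1)
        = if i + 1 = j + 1 then (1 : A) else 0 by
    rintro (_ | i) (_ | j) hi hj
    · omega
    · omega
    · omega
    · exact h i j
  intro i
  induction i with
  | zero =>
    intro j
    cases j with
    | zero =>
      simp only [Pseq, Qseq, if_pos rfl]
      rw [mul_assoc, h1', mul_assoc, h2', add_comm]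
      exact h5
    | succ m =>
      rw [if_neg (by omega)]
      simp [Pseq, Qseq, mul_sub, sub_mul, mul_assoc, h1', h2', h3', h4']
  | succ n ih =>
    intro j
    cases j with
    | zero =>
      rw [if_neg (by omega)]
      simp [Pseq, Qseq, mul_sub, sub_mul, mul_assoc, h1', h2', h3', h4']
    | succ m =>
      have hih := ih m
      show Pseq K1 Km1 E F (n + 2) * Qseq K1 Km1 E F (m + 2)
          + Qseq K1 Km1 E F (m + 2) * Pseq K1 Km1 E F (n + 2) = _
      simp only [Pseq, Qseq]
      set P := Pseq K1 Km1 E F (n + 1) with hP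
      set Q := Qseq K1 Km1 E F (m + 1) with hQ
      rw [key, key]
      have expand : K1 * (P * Q) * Km1 + E * (P * Q) * F
          + (K1 * (Q * P) * Km1 + E * (Q * P) * F)
          = K1 * (P * Q + Q * P) * Km1 + E * (P * Q + Q * P) * F := by noncomm_ring
      rw [expand, hih]
      rcases eq_or_ne n m with rfl | hne
      · simpa using h5
      · rw [if_neg (by omega), if_neg (by omega)]
        simp
end

section
/- In the algebra E, the generating series P(z) = Σ_{i≥1} Pᵢzⁱ satisfies P(z)K₁ = z(E + K₁P(z)), K₋₁P(z) = zP(z)K₋₁, P(z)E = −zEP(z), and FP(z) = z(K₋₁ − P(z)F), as identities of formal power series with coefficients in E. -/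
/-- The generating series P(z) = Σ_{i≥1} Pᵢ zⁱ as a formal power series over A. -/
noncomputable def Pser {A : Type*} [Ring A] (K1 Km1 E F : A) : PowerSeries A :=
  PowerSeries.mk (Pseq K1 Km1 E F)

open PowerSeries in
/- In the algebra 𝓔 (any ℚ-algebra with elements K₁ (`K1`), K₋₁ (`Km1`), E, F
satisfying the relations), the series P(z) satisfies, as identities of formal
power series with coefficients in 𝓔:
P(z)K₁ = z(E + K₁P(z)),  K₋₁P(z) = zP(z)K₋₁,  P(z)E = −zEP(z),
FP(z) = z(K₋₁ − P(z)F). -/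
theorem stmt5 {A : Type*} [Ring A] [Algebra ℚ A] (K1 Km1 E F : A)
    (h1 : Km1 * K1 = 1) (h2 : F * E = 1) (h3 : Km1 * E = 0) (h4 : F * K1 = 0)
    (h5 : K1 * Km1 + E * F = 1) :
    Pser K1 Km1 E F * C K1 = X * (C E + C K1 * Pser K1 Km1 E F)
    ∧ C Km1 * Pser K1 Km1 E F = X * (Pser K1 Km1 E F * C Km1)
    ∧ Pser K1 Km1 E F * C E = -(X * (C E * Pser K1 Km1 E F))
    ∧ C F * Pser K1 Km1 E F = X * (C Km1 - Pser K1 Km1 E F * C F) := by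
  have L1 : ∀ n, Pseq K1 Km1 E F (n+1) * K1
      = (if n = 0 then E else 0) + K1 * Pseq K1 Km1 E F n := by
    rintro (_ | n)
    · simp [Pseq, mul_assoc, h1]
    · simp only [Pseq, Nat.succ_ne_zero, if_neg, sub_mul]
      rw [mul_assoc (K1 * _), mul_assoc (E * _), h1, h4]
      simp [mul_assoc]
  have L2 : ∀ n, Km1 * Pseq K1 Km1 E F (n+1) = Pseq K1 Km1 E F n * Km1 := by
    rintro (_ | n)
    · simp [Pseq, ← mul_assoc, h3]
    · show Km1 * (K1 * _ * Km1 - E * _ * F) = _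
      rw [mul_sub, ← mul_assoc, ← mul_assoc, ← mul_assoc, ← mul_assoc, h1, h3]
      simp
  have L3 : ∀ n, Pseq K1 Km1 E F (n+1) * E = -(E * Pseq K1 Km1 E F n) := by
    rintro (_ | n)
    · simp [Pseq, mul_assoc, h3]
    · show (K1 * _ * Km1 - E * _ * F) * E = _
      rw [sub_mul, mul_assoc (K1 * _), mul_assoc (E * _), h3, h2]
      simp [mul_assoc]
  have L4 : ∀ n, F * Pseq K1 Km1 E F (n+1)
      = (if n = 0 then Km1 else 0) - Pseq K1 Km1 E F n * F := by
    rintro (_ | n)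
    · simp [Pseq, ← mul_assoc, h2]
    · show F * (K1 * _ * Km1 - E * _ * F) = _
      rw [mul_sub, ← mul_assoc, ← mul_assoc, ← mul_assoc, ← mul_assoc, h4, h2]
      simp
  refine ⟨?_, ?_, ?_, ?_⟩ <;> ext (_ | n) <;>
    simp [Pser, Pseq, coeff_succ_X_mul, coeff_C, L1, L2, L3, L4, mul_comm]
end

section
/- For any module W over the algebra E, the actions of K₁ and E on W are injective, the actions of K₋₁ and F on W are surjective, K₁W equals the kernel of F acting on W, EW equals the kernel of K₋₁ acting on W, and W decomposes as the internal direct sum K₁W ⊕ EW of vector spaces. -/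
/- For any module W over the algebra 𝓔 (i.e. a ℚ-vector space with commuting
linear operators K₁ (`K1`), K₋₁ (`Km1`), E, F satisfying the defining relations
K₋₁K₁ = FE = 1, K₋₁E = FK₁ = 0, K₁K₋₁ + EF = 1):
K₁ and E act injectively, K₋₁ and F act surjectively, K₁W = ker F, EW = ker K₋₁,
and W = K₁W ⊕ EW as an internal direct sum of vector spaces. -/
theorem stmt6 {W : Type*} [AddCommGroup W] [Module ℚ W]
    (K1 Km1 E F : Module.End ℚ W)
    (h1 : Km1 * K1 = 1) (h2 : F * E = 1) (h3 : Km1 * E = 0) (h4 : F * K1 = 0)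
    (h5 : K1 * Km1 + E * F = 1) :
    Function.Injective K1 ∧ Function.Injective E
    ∧ Function.Surjective Km1 ∧ Function.Surjective F
    ∧ LinearMap.range K1 = LinearMap.ker F
    ∧ LinearMap.range E = LinearMap.ker Km1
    ∧ IsCompl (LinearMap.range K1) (LinearMap.range E) := by
  have app : ∀ (A B : Module.End ℚ W) (x : W), (A * B) x = A (B x) := fun _ _ _ => rfl
  have hK1inj : Function.Injective K1 := by
    intro x y h
    have := congrArg Km1 h
    rw [← app, ← app, h1] at this
    exact this
  have hEinj : Function.Injective E := by
    intro x y h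
    have := congrArg F h
    rw [← app, ← app, h2] at this
    exact this
  have hKm1surj : Function.Surjective Km1 := fun y =>
    ⟨K1 y, by rw [← app, h1]; rfl⟩
  have hFsurj : Function.Surjective F := fun y =>
    ⟨E y, by rw [← app, h2]; rfl⟩
  have hrK1 : LinearMap.range K1 = LinearMap.ker F := by
    ext x
    constructor
    · rintro ⟨y, rfl⟩
      simp only [LinearMap.mem_ker, ← app, h4, LinearMap.zero_apply]
    · intro hx
      refine ⟨Km1 x, ?_⟩
      have := congrArg (fun f : Module.End ℚ W => f x) h5
      simp only [LinearMap.add_apply, Module.End.one_apply, app] at this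
      rw [LinearMap.mem_ker.mp hx, map_zero, add_zero] at this
      exact this
  have hrE : LinearMap.range E = LinearMap.ker Km1 := by
    ext x
    constructor
    · rintro ⟨y, rfl⟩
      simp only [LinearMap.mem_ker, ← app, h3, LinearMap.zero_apply]
    · intro hx
      refine ⟨F x, ?_⟩
      have := congrArg (fun f : Module.End ℚ W => f x) h5
      simp only [LinearMap.add_apply, Module.End.one_apply, app] at this
      rw [LinearMap.mem_ker.mp hx, map_zero, zero_add] at this
      exact this
  refine ⟨hK1inj, hEinj, hKm1surj, hFsurj, hrK1, hrE, ?_⟩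
  constructor
  · rw [disjoint_iff]
    ext x
    simp only [Submodule.mem_inf, Submodule.mem_bot, hrK1, hrE, LinearMap.mem_ker]
    constructor
    · rintro ⟨hF, hKm1⟩
      have := congrArg (fun f : Module.End ℚ W => f x) h5
      simp only [LinearMap.add_apply, Module.End.one_apply, app] at this
      rw [hF, hKm1, map_zero, map_zero, add_zero] at this
      exact this.symm
    · rintro rfl
      exact ⟨map_zero _, map_zero _⟩
  · rw [codisjoint_iff]
    rw [eq_top_iff]
    intro x _
    have hx : x = K1 (Km1 x) + E (F x) := by
      have := congrArg (fun f : Module.End ℚ W => f x) h5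
      simp only [LinearMap.add_apply, Module.End.one_apply, app] at this
      exact this.symm
    rw [hx]
    exact Submodule.add_mem_sup ⟨Km1 x, rfl⟩ ⟨F x, rfl⟩
end

section
/- Every nonzero module over the algebra E is infinite-dimensional as a ℚ-vector space. -/
/- Every nonzero module over the algebra 𝓔 (a ℚ-vector space with linear
operators K₁ (`K1`), K₋₁ (`Km1`), E, F satisfying K₋₁K₁ = FE = 1,
K₋₁E = FK₁ = 0, K₁K₋₁ + EF = 1) is infinite-dimensional over ℚ. -/
theorem stmt7 {W : Type*} [AddCommGroup W] [Module ℚ W] [Nontrivial W]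
    (K1 Km1 E F : Module.End ℚ W)
    (h1 : Km1 * K1 = 1) (h2 : F * E = 1) (h3 : Km1 * E = 0) (h4 : F * K1 = 0)
    (h5 : K1 * Km1 + E * F = 1) :
    ¬ FiniteDimensional ℚ W := by
  intro hfd
  have hsurj : Function.Surjective Km1 := by
    intro w
    refine ⟨K1 w, ?_⟩
    have := LinearMap.ext_iff.mp h1 w
    simpa [Module.End.mul_apply] using this
  have hinj : Function.Injective Km1 :=
    (LinearMap.injective_iff_surjective).mpr hsurj
  have hE : E = 0 := by
    ext w
    apply hinj
    have := LinearMap.ext_iff.mp h3 w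
    simpa [Module.End.mul_apply] using this
  obtain ⟨w, hw⟩ := exists_ne (0 : W)
  have := LinearMap.ext_iff.mp h2 w
  rw [hE] at this
  simp [Module.End.mul_apply] at this
  exact hw this.symm
end

section
/- The Fermionic Fock space F = ⊕_{k≥0} Λᵏ V, where V has basis x₁, x₂, …, carries a representation of the algebra E via K₁(x_{j₁}∧⋯∧x_{j_k}) = x_{j₁+1}∧⋯∧x_{j_k+1}, K₋₁(x_{j₁}∧⋯∧x_{j_k}) = x_{j₁−1}∧⋯∧x_{j_k−1} (with x₀ := 0), E(x_{j₁}∧⋯∧x_{j_k}) = x₁∧x_{j₁+1}∧⋯∧x_{j_k+1}, and F(x_{j₁}∧⋯∧x_{j_k}) = ∂/∂x₁(x_{j₁−1}∧⋯∧x_{j_k−1}); that is, these four operators satisfy K₋₁K₁ = FE = id, K₋₁E = FK₁ = 0, and K₁K₋₁ + EF = id. -/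
/-- The Fermionic Fock space F = ⊕_{k≥0} ΛᵏV, V = ⊕_{i≥1} ℚxᵢ: it has basis the
sorted wedge monomials x_{i₁}∧⋯∧x_{i_k} (0 < i₁ < ⋯ < i_k), which we index by
the finite set s = {i₁−1, …, i_k−1} ⊆ ℕ (an element n of s encodes the factor
x_{n+1}). -/
abbrev Fock : Type := Finset ℕ →₀ ℚ

/-- The basis vector of `Fock` corresponding to a wedge monomial. -/
noncomputable def fockBasis (s : Finset ℕ) : Fock := Finsupp.single s 1

/-- Linear extension of a map defined on wedge-monomial basis vectors. -/
noncomputable def fockOp (g : Finset ℕ → Fock) : Module.End ℚ Fock :=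
  Finsupp.lift Fock ℚ (Finset ℕ) g

/-- K₁(x_{j₁}∧⋯∧x_{j_k}) = x_{j₁+1}∧⋯∧x_{j_k+1}. -/
noncomputable def K1op : Module.End ℚ Fock :=
  fockOp fun s => fockBasis (s.image (· + 1))

/-- K₋₁(x_{j₁}∧⋯∧x_{j_k}) = x_{j₁−1}∧⋯∧x_{j_k−1}, with x₀ := 0. -/
noncomputable def Km1op : Module.End ℚ Fock :=
  fockOp fun s => if 0 ∈ s then 0 else fockBasis (s.image (· - 1))

/-- E(x_{j₁}∧⋯∧x_{j_k}) = x₁∧x_{j₁+1}∧⋯∧x_{j_k+1}. -/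
noncomputable def Eop : Module.End ℚ Fock :=
  fockOp fun s => fockBasis (insert 0 (s.image (· + 1)))

/-- F(x_{j₁}∧⋯∧x_{j_k}) = ∂/∂x₁(x_{j₁−1}∧⋯∧x_{j_k−1}): the contraction with x₁
combined with the downward shift of indices (the component of ∂/∂x₁ picking out
the factor x₁, i.e. j₁ = 1, after which all remaining indices drop by one). -/
noncomputable def Fop : Module.End ℚ Fock :=
  fockOp fun s => if 0 ∈ s then fockBasis ((s.erase 0).image (· - 1)) else 0

lemma fockOp_single (g : Finset ℕ → Fock) (s : Finset ℕ) (a : ℚ) :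
    fockOp g (Finsupp.single s a) = a • g s := by
  simp [fockOp]

lemma zero_not_mem_image (s : Finset ℕ) : 0 ∉ s.image (· + 1) := by
  simp

lemma image_sub_image_add (s : Finset ℕ) : (s.image (· + 1)).image (· - 1) = s := by
  rw [Finset.image_image]
  have : ((fun x => x - 1) ∘ fun x : ℕ => x + 1) = id := by funext n; simp
  rw [this, Finset.image_id]

lemma image_add_image_sub (s : Finset ℕ) (hs : 0 ∉ s) :
    (s.image (· - 1)).image (· + 1) = s := by
  rw [Finset.image_image]
  rw [show s = s.image id from (Finset.image_id).symm]
  rw [Finset.image_image]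
  apply Finset.image_congr
  intro n hn
  have hn0 : n ≠ 0 := by rintro rfl; exact hs (Finset.mem_coe.mp hn)
  simp only [Function.comp, id]
  omega

/- The four operators K₁, K₋₁, E, F on the Fermionic Fock space satisfy
K₋₁K₁ = FE = id, K₋₁E = FK₁ = 0, K₁K₋₁ + EF = id, i.e. they define a
representation of the algebra 𝓔 on the Fermionic Fock space. -/
theorem stmt8 :
    Km1op * K1op = 1 ∧ Fop * Eop = 1 ∧ Km1op * Eop = 0 ∧ Fop * K1op = 0
    ∧ K1op * Km1op + Eop * Fop = 1 := by
  refine ⟨?_, ?_, ?_, ?_, ?_⟩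
  · apply Finsupp.lhom_ext
    intro s a
    simp [Km1op, K1op, Module.End.mul_apply, fockOp_single, fockBasis,
      Finsupp.smul_single, zero_not_mem_image, image_sub_image_add]
  · apply Finsupp.lhom_ext
    intro s a
    have h0 : (0 : ℕ) ∈ insert 0 (s.image (· + 1)) := Finset.mem_insert_self _ _
    simp [Fop, Eop, Module.End.mul_apply, fockOp_single, fockBasis,
      Finsupp.smul_single, h0, Finset.erase_insert (zero_not_mem_image s),
      image_sub_image_add]
  · apply Finsupp.lhom_ext
    intro s a
    simp [Km1op, Eop, Module.End.mul_apply, fockOp_single, fockBasis,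
      Finsupp.smul_single]
  · apply Finsupp.lhom_ext
    intro s a
    simp [Fop, K1op, Module.End.mul_apply, fockOp_single, fockBasis,
      Finsupp.smul_single, zero_not_mem_image]
  · apply Finsupp.lhom_ext
    intro s a
    by_cases h : 0 ∈ s
    · have h1 : 0 ∉ s.erase 0 := Finset.notMem_erase _ _
      simp [K1op, Km1op, Eop, Fop, Module.End.mul_apply, fockOp_single, fockBasis,
        Finsupp.smul_single, h, image_add_image_sub _ h1, Finset.insert_erase h]
    · simp [K1op, Km1op, Eop, Fop, Module.End.mul_apply, fockOp_single, fockBasis,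
        Finsupp.smul_single, h, image_add_image_sub _ h]
end

section
/- The Fermionic Fock space F, with the E-module structure given by the shift operators, is irreducible: any nonzero E-submodule of F equals F. -/
lemma fockOp_basis (g : Finset ℕ → Fock) (s : Finset ℕ) : fockOp g (fockBasis s) = g s := by
  simp [fockOp, fockBasis]

lemma K1_basis (s : Finset ℕ) : K1op (fockBasis s) = fockBasis (s.image (· + 1)) :=
  fockOp_basis _ s
lemma Km1_basis (s : Finset ℕ) :
    Km1op (fockBasis s) = if 0 ∈ s then 0 else fockBasis (s.image (· - 1)) :=
  fockOp_basis _ s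
lemma E_basis (s : Finset ℕ) : Eop (fockBasis s) = fockBasis (insert 0 (s.image (· + 1))) :=
  fockOp_basis _ s
lemma F_basis (s : Finset ℕ) :
    Fop (fockBasis s) = if 0 ∈ s then fockBasis ((s.erase 0).image (· - 1)) else 0 :=
  fockOp_basis _ s

lemma Km1_pow_basis (a : ℕ) (t : Finset ℕ) :
    (Km1op ^ a) (fockBasis t) =
      if ∀ b ∈ t, a ≤ b then fockBasis (t.image (· - a)) else 0 := by
  induction a generalizing t with
  | zero => simp [Finset.image_id']
  | succ a ih =>
    rw [pow_succ, Module.End.mul_apply, Km1_basis]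
    by_cases h0 : 0 ∈ t
    · rw [if_pos h0, map_zero, if_neg]
      push_neg
      exact ⟨0, h0, by omega⟩
    · rw [if_neg h0, ih]
      have hiff : (∀ b ∈ t.image (· - 1), a ≤ b) ↔ (∀ b ∈ t, a + 1 ≤ b) := by
        simp only [Finset.mem_image, forall_exists_index, and_imp]
        constructor
        · intro h b hb
          have h1 : 1 ≤ b := by
            rcases Nat.eq_zero_or_pos b with h'|h'
            · exact absurd (h' ▸ hb) h0
            · omega
          have := h (b-1) b hb rfl; omega
        · rintro h _ b hb rfl; have := h b hb; omega
      rw [if_congr hiff rfl rfl]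
      congr 1
      rw [Finset.image_image]
      congr 1
      apply Finset.image_congr
      intro b _; simp; omega

lemma K1_pow_basis (a : ℕ) (t : Finset ℕ) :
    (K1op ^ a) (fockBasis t) = fockBasis (t.image (· + a)) := by
  induction a generalizing t with
  | zero => simp [Finset.image_id']
  | succ a ih =>
    rw [pow_succ, Module.End.mul_apply, K1_basis, ih]
    congr 1
    rw [Finset.image_image]
    apply Finset.image_congr
    intro b _; simp; omega

noncomputable def Dop (m : ℕ) : Module.End ℚ Fock := Fop * Km1op ^ m

lemma Dop_basis (m : ℕ) (t : Finset ℕ) :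
    Dop m (fockBasis t) =
      if m ∈ t ∧ ∀ b ∈ t, m ≤ b then fockBasis ((t.erase m).image (· - (m+1))) else 0 := by
  rw [Dop, Module.End.mul_apply, Km1_pow_basis]
  by_cases hmin : ∀ b ∈ t, m ≤ b
  · rw [if_pos hmin, F_basis]
    by_cases hm : m ∈ t
    · rw [if_pos (Finset.mem_image.2 ⟨m, hm, by omega⟩), if_pos ⟨hm, hmin⟩]
      congr 1
      ext c
      simp only [Finset.mem_image, Finset.mem_erase]
      constructor
      · rintro ⟨a, ⟨ha0, b, hb, rfl⟩, rfl⟩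
        have hbm := hmin b hb
        have hbne : b ≠ m := by intro h; subst h; omega
        exact ⟨b, ⟨hbne, hb⟩, by omega⟩
      · rintro ⟨b, ⟨hbne, hb⟩, rfl⟩
        have hbm := hmin b hb
        exact ⟨b - m, ⟨by omega, b, hb, rfl⟩, by omega⟩
    · rw [if_neg, if_neg (by tauto)]
      intro h0
      obtain ⟨b, hb, hb0⟩ := Finset.mem_image.1 h0
      have := hmin b hb
      have : b = m := by omega
      exact hm (this ▸ hb)
  · rw [if_neg hmin, map_zero, if_neg (by tauto)]

lemma mem_shift (u : Finset ℕ) (m : ℕ) (hu : ∀ b ∈ u, m ≤ b) (a : ℕ) :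
    a ∈ (u.erase m).image (· - (m+1)) ↔ a + (m+1) ∈ u := by
  simp only [Finset.mem_image, Finset.mem_erase]
  constructor
  · rintro ⟨b, ⟨hbm, hb⟩, rfl⟩
    have h1 := hu b hb
    have hb' : b - (m+1) + (m+1) = b := by omega
    rw [hb']; exact hb
  · intro h; exact ⟨a + (m+1), ⟨by omega, h⟩, by omega⟩

noncomputable def shiftVal (s : Finset ℕ) : ℕ := if h : s.Nonempty then s.max' h + 1 else 0

lemma shiftVal_shift (m : ℕ) (s : Finset ℕ) (hm : m ∈ s) (hmin : ∀ a ∈ s, m ≤ a) :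
    shiftVal ((s.erase m).image (· - (m+1))) + (m+1) = shiftVal s := by
  have h : s.Nonempty := ⟨m, hm⟩
  have hmem : ∀ a, a ∈ (s.erase m).image (· - (m+1)) ↔ a + (m+1) ∈ s := mem_shift s m hmin
  rcases ((s.erase m).image (· - (m+1))).eq_empty_or_nonempty with he | hne
  · have hsub : s = {m} := by
      apply Finset.eq_singleton_iff_unique_mem.2
      refine ⟨hm, fun b hb => ?_⟩
      by_contra hbm
      have hbge : m ≤ b := hmin b hb
      have hb2 : b - (m+1) ∈ (s.erase m).image (· - (m+1)) := by
        rw [hmem]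
        have hh : b - (m+1) + (m+1) = b := by omega
        rw [hh]; exact hb
      simp [he] at hb2
    have hmax : s.max' h = m := by
      apply le_antisymm
      · apply Finset.max'_le
        intro b hb
        rw [hsub, Finset.mem_singleton] at hb
        omega
      · exact s.le_max' m hm
    rw [shiftVal, shiftVal, dif_neg (by simp [he]), dif_pos h, hmax]
    omega
  · rw [shiftVal, shiftVal, dif_pos hne, dif_pos h]
    obtain ⟨a0, ha0⟩ := hne
    have ha0' := (hmem a0).1 ha0
    have h1 : m + 1 ≤ s.max' h := by
      have := s.le_max' _ ha0'
      omega
    have hmax : (Finset.image (· - (m+1)) (s.erase m)).max' ⟨a0, ha0⟩ = s.max' h - (m+1) := by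
      apply le_antisymm
      · apply Finset.max'_le
        intro a ha
        have := s.le_max' _ ((hmem a).1 ha)
        omega
      · apply Finset.le_max'
        rw [hmem]
        have hh : s.max' h - (m+1) + (m+1) = s.max' h := by omega
        rw [hh]; exact s.max'_mem h
    omega

lemma cond_shift (m : ℕ) (s t : Finset ℕ) (hms : m ∈ s) (hmins : ∀ a ∈ s, m ≤ a)
    (hmt : m ∈ t) (hmint : ∀ b ∈ t, m ≤ b) :
    ((s.erase m).image (· - (m+1)) ⊆ (t.erase m).image (· - (m+1)) ∧
      ∀ b ∈ (t.erase m).image (· - (m+1)), b ∉ (s.erase m).image (· - (m+1)) →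
        ∀ a ∈ (s.erase m).image (· - (m+1)), a < b)
    ↔ (s ⊆ t ∧ ∀ b ∈ t, b ∉ s → ∀ a ∈ s, a < b) := by
  have hmems : ∀ a, a ∈ (s.erase m).image (· - (m+1)) ↔ a + (m+1) ∈ s := mem_shift s m hmins
  have hmemt : ∀ a, a ∈ (t.erase m).image (· - (m+1)) ↔ a + (m+1) ∈ t := mem_shift t m hmint
  constructor
  · rintro ⟨hsub', hlt'⟩
    constructor
    · intro c hc
      rcases eq_or_ne c m with rfl | hne
      · exact hmt
      · have hcm : m + 1 ≤ c := by have := hmins c hc; omega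
        have h2 : c - (m+1) ∈ (s.erase m).image (· - (m+1)) := by
          rw [hmems]
          have hh : c - (m+1) + (m+1) = c := by omega
          rw [hh]; exact hc
        have h3 := hsub' h2
        rw [hmemt] at h3
        have hh : c - (m+1) + (m+1) = c := by omega
        rwa [hh] at h3
    · intro b hbt hbs a ha
      have hbm : m < b := by
        have h1 := hmint b hbt
        have h2 : b ≠ m := fun hh => hbs (hh ▸ hms)
        omega
      rcases eq_or_ne a m with rfl | hne
      · omega
      · have ham : m + 1 ≤ a := by have := hmins a ha; omega
        have ha' : a - (m+1) ∈ (s.erase m).image (· - (m+1)) := by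
          rw [hmems]
          have hh : a - (m+1) + (m+1) = a := by omega
          rw [hh]; exact ha
        have hb' : b - (m+1) ∈ (t.erase m).image (· - (m+1)) := by
          rw [hmemt]
          have hh : b - (m+1) + (m+1) = b := by omega
          rw [hh]; exact hbt
        have hbs' : b - (m+1) ∉ (s.erase m).image (· - (m+1)) := by
          intro hmem2
          rw [hmems] at hmem2
          have h3 : b - (m+1) + (m+1) = b := by omega
          rw [h3] at hmem2
          exact hbs hmem2
        have := hlt' _ hb' hbs' _ ha'
        omega
  · rintro ⟨hsub, hlt⟩
    constructor
    · intro a ha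
      rw [hmemt]
      exact hsub ((hmems a).1 ha)
    · intro b hb hbs a ha
      rw [hmemt] at hb
      have h1 : b + (m+1) ∉ s := fun hh => hbs ((hmems b).2 hh)
      have := hlt _ hb h1 _ ((hmems a).1 ha)
      omega

lemma image_shift_eq (m : ℕ) (s t : Finset ℕ) (hms : m ∈ s) (hmins : ∀ a ∈ s, m ≤ a)
    (hmint : ∀ b ∈ t, m ≤ b) :
    ((t.erase m).image (· - (m+1)) \ (s.erase m).image (· - (m+1))).image
        (· - shiftVal ((s.erase m).image (· - (m+1))))
      = (t \ s).image (· - shiftVal s) := by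
  have hmems : ∀ a, a ∈ (s.erase m).image (· - (m+1)) ↔ a + (m+1) ∈ s := mem_shift s m hmins
  have hmemt : ∀ a, a ∈ (t.erase m).image (· - (m+1)) ↔ a + (m+1) ∈ t := mem_shift t m hmint
  have hsv := shiftVal_shift m s hms hmins
  ext c
  constructor
  · intro hc
    obtain ⟨a, ha, rfl⟩ := Finset.mem_image.1 hc
    obtain ⟨hat, has⟩ := Finset.mem_sdiff.1 ha
    rw [hmemt] at hat
    rw [hmems] at has
    exact Finset.mem_image.2 ⟨a + (m+1), Finset.mem_sdiff.2 ⟨hat, has⟩, by omega⟩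
  · intro hc
    obtain ⟨b, hb, rfl⟩ := Finset.mem_image.1 hc
    obtain ⟨hbt, hbs⟩ := Finset.mem_sdiff.1 hb
    have hbm : m < b := by
      have h1 := hmint b hbt
      have h2 : b ≠ m := fun hh => hbs (hh ▸ hms)
      omega
    have hh : b - (m+1) + (m+1) = b := by omega
    refine Finset.mem_image.2 ⟨b - (m+1), Finset.mem_sdiff.2 ⟨?_, ?_⟩, by omega⟩
    · rw [hmemt, hh]; exact hbt
    · intro hmem2
      rw [hmems, hh] at hmem2
      exact hbs hmem2

noncomputable def extractOp (s : Finset ℕ) : Module.End ℚ Fock :=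
  if h : s.Nonempty then
    extractOp ((s.erase (s.min' h)).image (· - (s.min' h + 1))) * Dop (s.min' h)
  else 1
termination_by s.card
decreasing_by
  calc ((s.erase (s.min' h)).image (· - (s.min' h + 1))).card
      ≤ (s.erase (s.min' h)).card := Finset.card_image_le
    _ < s.card := Finset.card_erase_lt_of_mem (s.min'_mem h)

lemma extract_basis : ∀ n (s : Finset ℕ), s.card ≤ n → ∀ t : Finset ℕ,
    extractOp s (fockBasis t) =
      if s ⊆ t ∧ ∀ b ∈ t, b ∉ s → ∀ a ∈ s, a < b
      then fockBasis ((t \ s).image (· - shiftVal s)) else 0 := by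
  intro n
  induction n with
  | zero =>
    intro s hcard t
    have hs : s = ∅ := Finset.card_eq_zero.1 (Nat.le_zero.1 hcard)
    subst hs
    rw [extractOp, dif_neg (by simp)]
    rw [if_pos ⟨Finset.empty_subset t, fun b _ _ a ha => absurd ha (by simp)⟩]
    simp [shiftVal, Finset.image_id']
  | succ n ih =>
    intro s hcard t
    rcases s.eq_empty_or_nonempty with hs | h
    · subst hs
      rw [extractOp, dif_neg (by simp)]
      rw [if_pos ⟨Finset.empty_subset t, fun b _ _ a ha => absurd ha (by simp)⟩]
      simp [shiftVal, Finset.image_id']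
    · have hmins : ∀ a ∈ s, s.min' h ≤ a := fun a ha => s.min'_le a ha
      have hcard' : ((s.erase (s.min' h)).image (· - (s.min' h + 1))).card ≤ n := by
        have h1 : ((s.erase (s.min' h)).image (· - (s.min' h + 1))).card ≤ (s.erase (s.min' h)).card :=
          Finset.card_image_le
        have h2 : (s.erase (s.min' h)).card < s.card := Finset.card_erase_lt_of_mem (s.min'_mem h)
        omega
      rw [extractOp, dif_pos h, Module.End.mul_apply, Dop_basis]
      by_cases hc1 : s.min' h ∈ t ∧ ∀ b ∈ t, s.min' h ≤ b
      · obtain ⟨hmt, hmint⟩ := hc1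
        rw [if_pos ⟨hmt, hmint⟩, ih _ hcard']
        rw [if_congr (cond_shift (s.min' h) s t (s.min'_mem h) hmins hmt hmint) rfl rfl]
        by_cases hcond : s ⊆ t ∧ ∀ b ∈ t, b ∉ s → ∀ a ∈ s, a < b
        · rw [if_pos hcond, if_pos hcond]
          rw [image_shift_eq (s.min' h) s t (s.min'_mem h) hmins hmint]
        · rw [if_neg hcond, if_neg hcond]
      · rw [if_neg hc1, map_zero, if_neg]
        intro ⟨hsub, hlt⟩
        apply hc1
        refine ⟨hsub (s.min'_mem h), fun b hbt => ?_⟩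
        by_cases hbs : b ∈ s
        · exact hmins b hbs
        · exact le_of_lt (hlt b hbt hbs _ (s.min'_mem h))


/- The Fermionic Fock space, with the 𝓔-module structure given by the shift
operators above, is irreducible: any nonzero subspace stable under the four
operators K₁, K₋₁, E, F is the whole space. -/
theorem stmt9 (N : Submodule ℚ Fock)
    (hK1 : ∀ x ∈ N, K1op x ∈ N) (hKm1 : ∀ x ∈ N, Km1op x ∈ N)
    (hE : ∀ x ∈ N, Eop x ∈ N) (hF : ∀ x ∈ N, Fop x ∈ N)
    (hne : N ≠ ⊥) : N = ⊤ := by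
  -- powers preserve N
  have hKm1pow : ∀ (a : ℕ), ∀ x ∈ N, (Km1op ^ a) x ∈ N := by
    intro a
    induction a with
    | zero => intro x hx; simpa using hx
    | succ a ih =>
      intro x hx
      rw [pow_succ, Module.End.mul_apply]
      exact ih _ (hKm1 x hx)
  have hK1pow : ∀ (a : ℕ), ∀ x ∈ N, (K1op ^ a) x ∈ N := by
    intro a
    induction a with
    | zero => intro x hx; simpa using hx
    | succ a ih =>
      intro x hx
      rw [pow_succ, Module.End.mul_apply]
      exact ih _ (hK1 x hx)
  have hD : ∀ (m : ℕ), ∀ x ∈ N, Dop m x ∈ N := by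
    intro m x hx
    rw [Dop, Module.End.mul_apply]
    exact hF _ (hKm1pow m x hx)
  have hExtract : ∀ n (s : Finset ℕ), s.card ≤ n → ∀ x ∈ N, extractOp s x ∈ N := by
    intro n
    induction n with
    | zero =>
      intro s hcard x hx
      have hs : s = ∅ := Finset.card_eq_zero.1 (Nat.le_zero.1 hcard)
      subst hs
      rw [extractOp, dif_neg (by simp)]
      simpa using hx
    | succ n ih =>
      intro s hcard x hx
      rcases s.eq_empty_or_nonempty with hs | h
      · subst hs
        rw [extractOp, dif_neg (by simp)]
        simpa using hx
      · have hcard' : ((s.erase (s.min' h)).image (· - (s.min' h + 1))).card ≤ n := by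
          have h1 : ((s.erase (s.min' h)).image (· - (s.min' h + 1))).card ≤ (s.erase (s.min' h)).card :=
            Finset.card_image_le
          have h2 : (s.erase (s.min' h)).card < s.card := Finset.card_erase_lt_of_mem (s.min'_mem h)
          omega
        rw [extractOp, dif_pos h, Module.End.mul_apply]
        exact ih _ hcard' _ (hD _ x hx)
  -- Step 1: the vacuum is in N
  obtain ⟨x, hxN, hx0⟩ := Submodule.exists_mem_ne_zero_of_ne_bot hne
  have hsupp : x.support.Nonempty := Finsupp.support_nonempty_iff.2 hx0
  obtain ⟨s, hs, hsmax⟩ := x.support.exists_max_image Finset.card hsupp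
  have hxsum : x = ∑ t ∈ x.support, (x t) • fockBasis t := by
    conv_lhs => rw [← Finsupp.sum_single x]
    rw [Finsupp.sum]
    apply Finset.sum_congr rfl
    intro t _
    rw [fockBasis, Finsupp.smul_single, smul_eq_mul, mul_one]
  have hext : extractOp s x = (x s) • fockBasis ∅ := by
    conv_lhs => rw [hxsum]
    rw [map_sum]
    rw [Finset.sum_eq_single s]
    · rw [map_smul, extract_basis s.card s le_rfl s]
      rw [if_pos ⟨Finset.Subset.refl s, fun b hb hb2 => absurd hb hb2⟩]
      congr 1
      simp
    · intro t ht hts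
      rw [map_smul, extract_basis s.card s le_rfl t]
      rw [if_neg, smul_zero]
      intro ⟨hsub, _⟩
      have hcard := hsmax t ht
      have := Finset.eq_of_subset_of_card_le hsub (le_trans hcard (le_refl s.card))
      exact hts this.symm
    · intro hns
      exact absurd hs hns
  have hvac : fockBasis ∅ ∈ N := by
    have h1 : extractOp s x ∈ N := hExtract s.card s le_rfl x hxN
    rw [hext] at h1
    have hxs : x s ≠ 0 := Finsupp.mem_support_iff.1 hs
    have := N.smul_mem (x s)⁻¹ h1
    rwa [smul_smul, inv_mul_cancel₀ hxs, one_smul] at this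
  -- Step 2: every basis vector is in N
  have hbasis : ∀ n (s : Finset ℕ), s.card ≤ n → fockBasis s ∈ N := by
    intro n
    induction n with
    | zero =>
      intro s hcard
      have hs : s = ∅ := Finset.card_eq_zero.1 (Nat.le_zero.1 hcard)
      subst hs
      exact hvac
    | succ n ih =>
      intro s hcard
      rcases s.eq_empty_or_nonempty with hs | h
      · subst hs; exact hvac
      · set! m := s.min' h with hm
        have hmins : ∀ a ∈ s, s.min' h ≤ a := fun a ha => s.min'_le a ha
        have hmems : ∀ a, a ∈ (s.erase (s.min' h)).image (· - (s.min' h + 1)) ↔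
            a + (s.min' h + 1) ∈ s := mem_shift s (s.min' h) hmins
        have hcard' : ((s.erase (s.min' h)).image (· - (s.min' h + 1))).card ≤ n := by
          have h1 : ((s.erase (s.min' h)).image (· - (s.min' h + 1))).card ≤ (s.erase (s.min' h)).card :=
            Finset.card_image_le
          have h2 : (s.erase (s.min' h)).card < s.card := Finset.card_erase_lt_of_mem (s.min'_mem h)
          omega
        have hkey : fockBasis s =
            (K1op ^ (s.min' h)) (Eop (fockBasis ((s.erase (s.min' h)).image (· - (s.min' h + 1))))) := by
          rw [E_basis, K1_pow_basis]
          congr 1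
          rw [Finset.image_insert]
          ext c
          simp only [Finset.mem_insert, Finset.mem_image]
          constructor
          · intro hc
            rcases eq_or_ne c (s.min' h) with rfl | hne
            · left; omega
            · right
              have h3 := hmins c hc
              refine ⟨c - (s.min' h + 1) + 1, ⟨c - (s.min' h + 1),
                ⟨c, Finset.mem_erase.2 ⟨hne, hc⟩, rfl⟩, rfl⟩, by omega⟩
          · rintro (rfl | ⟨a, ⟨a1, ⟨a2, ha2, rfl⟩, rfl⟩, rfl⟩)
            · simpa using s.min'_mem h
            · have h1 : a2 ∈ s := Finset.mem_of_mem_erase ha2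
              have h2 : a2 ≠ s.min' h := Finset.ne_of_mem_erase ha2
              have h3 := hmins a2 h1
              have hh : a2 - (s.min' h + 1) + 1 + s.min' h = a2 := by omega
              rwa [hh]
        rw [hkey]
        exact hK1pow _ _ (hE _ (ih _ hcard'))
  -- Step 3: N = ⊤
  apply Submodule.eq_top_iff'.2
  intro y
  have hysum : y = ∑ t ∈ y.support, (y t) • fockBasis t := by
    conv_lhs => rw [← Finsupp.sum_single y]
    rw [Finsupp.sum]
    apply Finset.sum_congr rfl
    intro t _
    rw [fockBasis, Finsupp.smul_single, smul_eq_mul, mul_one]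
  rw [hysum]
  exact Submodule.sum_mem N fun t _ => N.smul_mem _ (hbasis t.card t le_rfl)
end

section
/- Let W be a representation of the Heisenberg algebra on which, for each vector w and each k > 0, H_{−k}^N w = 0 for N sufficiently large (so the series below is locally finite). Define 𝓛_k := −Σ_{i≥1} (1/(kⁱ i!)) H_k^{i−1} H_{−k}^i. Then 𝓛_k H_k = id and H_{−k}(1 − H_k 𝓛_k) = 0 as operators on W. -/
/- Let W be a representation of the Heisenberg algebra ([Hᵢ,Hⱼ] = iδ_{i,−j}) on
which each H_{−k} (k > 0) acts locally nilpotently, and let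
𝓛_k := −Σ_{i≥1} (1/(kⁱ i!)) H_k^{i−1} H_{−k}ⁱ (a well-defined operator, here
axiomatised by its locally finite series expansion). Then 𝓛_k H_k = id and
H_{−k}(1 − H_k 𝓛_k) = 0 as operators on W. -/
theorem stmt12 {W : Type*} [AddCommGroup W] [Module ℚ W]
    (H : ℤ → Module.End ℚ W)
    (hrel : ∀ i j : ℤ, i ≠ 0 → j ≠ 0 →
      H i * H j - H j * H i = (if j = -i then (i : ℚ) else 0) • (1 : Module.End ℚ W))
    (hnil : ∀ (w : W) (k : ℤ), 0 < k → ∃ N : ℕ, ((H (-k)) ^ N) w = 0)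
    (k : ℤ) (hk : 0 < k) (L : Module.End ℚ W)
    (hL : ∀ w : W, ∃ N : ℕ, ∀ n ≥ N, L w =
      -∑ i ∈ Finset.Icc 1 n,
        ((1 : ℚ) / ((k : ℚ) ^ i * (Nat.factorial i : ℚ))) • ((H k ^ (i - 1) * H (-k) ^ i) w)) :
    L * H k = 1 ∧ H (-k) * (1 - H k * L) = 0 := by
  classical
  set A := H k with hA
  set B := H (-k) with hB
  have hk0 : (k : ℚ) ≠ 0 := by exact_mod_cast hk.ne'
  have hcom : A * B - B * A = (k : ℚ) • (1 : Module.End ℚ W) := by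
    have h := hrel k (-k) (by omega) (by omega)
    simpa using h
  have hBA : B * A = A * B - (k : ℚ) • (1 : Module.End ℚ W) := by
    rw [← hcom]; noncomm_ring
  -- scalar coefficient
  set c : ℕ → ℚ := fun j => (1 : ℚ) / ((k : ℚ) ^ j * (Nat.factorial j : ℚ)) with hc
  have hcrec : ∀ m : ℕ, c (m + 1) * (((m : ℚ) + 1) * (k : ℚ)) = c m := by
    intro m
    have hf : (Nat.factorial m : ℚ) ≠ 0 := by exact_mod_cast (Nat.factorial_pos m).ne'
    have hfs : (Nat.factorial (m+1) : ℚ) = ((m : ℚ) + 1) * (Nat.factorial m : ℚ) := by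
      push_cast [Nat.factorial_succ]; ring
    simp only [hc]
    rw [hfs]
    field_simp
    ring
  have comm1 : ∀ m : ℕ, B ^ (m + 1) * A
      = A * B ^ (m + 1) - (((m : ℚ) + 1) * (k : ℚ)) • B ^ m := by
    intro m
    induction m with
    | zero => simp [hBA]
    | succ m ih =>
      have h1 : B ^ (m + 2) * A = B * (B ^ (m + 1) * A) := by
        rw [pow_succ' B (m + 1), mul_assoc]
      rw [h1, ih, mul_sub, mul_smul_comm, ← mul_assoc, hBA, sub_mul, smul_mul_assoc,
        one_mul, mul_assoc, ← pow_succ', ← pow_succ', sub_sub, ← add_smul]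
      congr 1
      push_cast; ring
  have comm2 : ∀ m : ℕ, B * A ^ (m + 1)
      = A ^ (m + 1) * B - (((m : ℚ) + 1) * (k : ℚ)) • A ^ m := by
    intro m
    induction m with
    | zero => simp [hBA]
    | succ m ih =>
      have h1 : B * A ^ (m + 2) = (B * A ^ (m + 1)) * A := by
        rw [pow_succ A (m + 1), ← mul_assoc]
      rw [h1, ih, sub_mul, smul_mul_assoc, mul_assoc, hBA, mul_sub, mul_smul_comm,
        mul_one, ← mul_assoc, sub_sub]
      simp only [← pow_succ]
      rw [← add_smul]
      congr 1
      push_cast; ring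
  -- pointwise nilpotency upgrade
  have hnil' : ∀ (w : W), ∃ N : ℕ, ∀ n ≥ N, (B ^ n) w = 0 := by
    intro w
    obtain ⟨N, hN⟩ := hnil w k hk
    refine ⟨N, fun n hn => ?_⟩
    have : B ^ n = B ^ (n - N) * B ^ N := by rw [← pow_add]; congr 1; omega
    rw [this]
    simp [Module.End.mul_apply, hB, hN]
  constructor
  · -- L * A = 1
    apply LinearMap.ext
    intro w
    obtain ⟨N0, hN0⟩ := hnil' w
    obtain ⟨N1, hN1⟩ := hL (A w)
    set n := N0 + N1 with hn
    have hLw := hN1 n (by omega)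
    -- F j = c j • A^j (B^j w)
    set F : ℕ → W := fun j => c j • (A ^ j) ((B ^ j) w) with hF
    have hterm : ∀ m ∈ Finset.range n,
        c (1 + m) • ((A ^ (1 + m - 1) * B ^ (1 + m)) (A w)) = F (m + 1) - F m := by
      intro m _
      have h1 : (B ^ (m + 1)) (A w)
          = A ((B ^ (m + 1)) w) - (((m : ℚ) + 1) * (k : ℚ)) • (B ^ m) w := by
        have := congrArg (fun T : Module.End ℚ W => T w) (comm1 m)
        simpa [Module.End.mul_apply] using this
      have h2 : (A ^ (1 + m - 1) * B ^ (1 + m)) (A w)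
          = (A ^ (m + 1)) ((B ^ (m + 1)) w)
            - (((m : ℚ) + 1) * (k : ℚ)) • (A ^ m) ((B ^ m) w) := by
        have hidx : 1 + m - 1 = m := by omega
        have hidx2 : 1 + m = m + 1 := by omega
        rw [hidx, hidx2, Module.End.mul_apply, h1, map_sub, map_smul]
        congr 1
      have hidx2 : 1 + m = m + 1 := by omega
      rw [h2, smul_sub, hidx2, smul_smul, hcrec m]
    have hsum : ∑ i ∈ Finset.Icc 1 n,
        c i • ((A ^ (i - 1) * B ^ i) (A w)) = F n - F 0 := by
      rw [← Finset.Ico_add_one_right_eq_Icc, Finset.sum_Ico_eq_sum_range,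
        show n + 1 - 1 = n from rfl, Finset.sum_congr rfl hterm, Finset.sum_range_sub F n]
    have hF0 : F 0 = w := by simp [hF, hc]
    have hFn : F n = 0 := by
      have : (B ^ n) w = 0 := hN0 n (by omega)
      simp [hF, this]
    have : (L * A) w = L (A w) := rfl
    rw [Module.End.one_apply, Module.End.mul_apply, hLw]
    calc -∑ i ∈ Finset.Icc 1 n, c i • ((A ^ (i - 1) * B ^ i) (A w))
        = -(F n - F 0) := by rw [hsum]
      _ = w := by rw [hFn, hF0]; simp
  · -- B * (1 - A * L) = 0
    apply LinearMap.ext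
    intro w
    obtain ⟨N0, hN0⟩ := hnil' w
    obtain ⟨N1, hN1⟩ := hL w
    set n := N0 + N1 with hn
    have hLw := hN1 n (by omega)
    set G : ℕ → W := fun j => c j • (A ^ j) ((B ^ (j + 1)) w) with hG
    have hterm : ∀ m ∈ Finset.range n,
        c (1 + m) • (B ((A ((A ^ (1 + m - 1) * B ^ (1 + m)) w))) : W)
          = G (m + 1) - G m := by
      intro m _
      have hidx : 1 + m - 1 = m := by omega
      have hidx2 : 1 + m = m + 1 := by omega
      have h0 : A ((A ^ (1 + m - 1) * B ^ (1 + m)) w)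
          = (A ^ (m + 1)) ((B ^ (m + 1)) w) := by
        rw [hidx, hidx2, Module.End.mul_apply, ← Module.End.mul_apply A (A ^ m), ← pow_succ']
      have h1 : B ((A ^ (m + 1)) ((B ^ (m + 1)) w))
          = (A ^ (m + 1)) ((B ^ (m + 2)) w)
            - (((m : ℚ) + 1) * (k : ℚ)) • (A ^ m) ((B ^ (m + 1)) w) := by
        have := congrArg (fun T : Module.End ℚ W => T ((B ^ (m + 1)) w)) (comm2 m)
        simp only [Module.End.mul_apply, LinearMap.sub_apply, LinearMap.smul_apply] at this
        rw [this]
        congr 2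
        rw [← Module.End.mul_apply B (B ^ (m+1)), ← pow_succ']
      rw [h0, h1, smul_sub, hidx2, smul_smul, hcrec m]
    have hsum : ∑ i ∈ Finset.Icc 1 n,
        c i • (B (A ((A ^ (i - 1) * B ^ i) w)) : W) = G n - G 0 := by
      rw [← Finset.Ico_add_one_right_eq_Icc, Finset.sum_Ico_eq_sum_range,
        show n + 1 - 1 = n from rfl, Finset.sum_congr rfl hterm, Finset.sum_range_sub G n]
    have hG0 : G 0 = B w := by simp [hG, hc]
    have hGn : G n = 0 := by
      have : (B ^ (n + 1)) w = 0 := hN0 (n + 1) (by omega)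
      simp [hG, this]
    have key : B (A (L w)) = B w := by
      rw [hLw, map_neg, map_neg, map_sum, map_sum]
      have : ∀ i ∈ Finset.Icc 1 n,
          B (A (c i • ((A ^ (i - 1) * B ^ i) w))) = c i • (B (A ((A ^ (i - 1) * B ^ i) w)) : W) := by
        intro i _; rw [map_smul, map_smul]
      rw [Finset.sum_congr rfl this, hsum, hGn, hG0]
      simp
    show (B * (1 - A * L)) w = (0 : Module.End ℚ W) w
    simp only [Module.End.mul_apply, LinearMap.sub_apply, Module.End.one_apply,
      LinearMap.zero_apply, map_sub]
    rw [key]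
    simp
end

section
/- Let W be a graded admissible module over the Clifford algebra C (generators Pᵢ, Qᵢ, i ≥ 1, with {Pᵢ,Pⱼ}={Qᵢ,Qⱼ}=0, {Pᵢ,Qⱼ}=δᵢⱼ, Pᵢ of degree 1, Qᵢ of degree −1). Then the operator Λ := Σ_{i≥1} PᵢQᵢ (well-defined by admissibility) acts on the degree-i component W_i as multiplication by i. -/
/- Let W be a graded admissible module over the infinite Clifford algebra 𝓒
(generators Pᵢ, Qᵢ, i ≥ 1, with {Pᵢ,Pⱼ} = {Qᵢ,Qⱼ} = 0, {Pᵢ,Qⱼ} = δᵢⱼ; Pᵢ of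
degree 1 and Qᵢ of degree −1 with Qᵢ vanishing on W₀; admissibility: each
vector is killed by all Q_m with m large, and W₀ = ∩_{i>0}ker(Qᵢ)).  Then the
operator Λ := Σ_{i≥1} PᵢQᵢ (well-defined by admissibility, here axiomatised by
its locally finite series expansion) acts on the degree-i component W_i as
multiplication by i. -/
theorem stmt18 {M : Type*} [AddCommGroup M] [Module ℚ M]
    (𝒲 : ℕ → Submodule ℚ M) (hinternal : DirectSum.IsInternal 𝒲)
    (P Q : ℕ → Module.End ℚ M)
    (hPP : ∀ i j : ℕ, 1 ≤ i → 1 ≤ j → P i * P j + P j * P i = 0)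
    (hQQ : ∀ i j : ℕ, 1 ≤ i → 1 ≤ j → Q i * Q j + Q j * Q i = 0)
    (hPQ : ∀ i j : ℕ, 1 ≤ i → 1 ≤ j →
      P i * Q j + Q j * P i = if i = j then 1 else 0)
    (hPdeg : ∀ i : ℕ, 1 ≤ i → ∀ k : ℕ, ∀ w ∈ 𝒲 k, P i w ∈ 𝒲 (k + 1))
    (hQdeg : ∀ i : ℕ, 1 ≤ i → ∀ k : ℕ, ∀ w ∈ 𝒲 (k + 1), Q i w ∈ 𝒲 k)
    (hQ0 : ∀ i : ℕ, 1 ≤ i → ∀ w ∈ 𝒲 0, Q i w = 0)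
    (hadm1 : ∀ x : M, ∃ N : ℕ, ∀ m : ℕ, N < m → Q m x = 0)
    (hadm2 : 𝒲 0 = ⨅ (i : ℕ) (_ : 0 < i), LinearMap.ker (Q i))
    (Lam : Module.End ℚ M)
    (hLam : ∀ x : M, ∃ N : ℕ, ∀ n ≥ N,
      Lam x = ∑ i ∈ Finset.Icc 1 n, (P i) ((Q i) x)) :
    ∀ i : ℕ, ∀ w ∈ 𝒲 i, Lam w = (i : ℚ) • w := by
  intro i
  induction i with
  | zero =>
    intro w hw
    obtain ⟨N, hN⟩ := hLam w
    rw [hN N le_rfl]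
    simp only [Nat.cast_zero, zero_smul]
    apply Finset.sum_eq_zero
    intro i hi
    rw [hQ0 i (Finset.mem_Icc.mp hi).1 w hw, map_zero]
  | succ k ih =>
    intro w hw
    set v := Lam w - ((k + 1 : ℕ) : ℚ) • w with hv
    have hLamW : Lam w ∈ 𝒲 (k + 1) := by
      obtain ⟨N, hN⟩ := hLam w
      rw [hN N le_rfl]
      apply Submodule.sum_mem
      intro i hi
      have h1 : 1 ≤ i := (Finset.mem_Icc.mp hi).1
      exact hPdeg i h1 k _ (hQdeg i h1 k w hw)
    have hvW : v ∈ 𝒲 (k + 1) :=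
      Submodule.sub_mem _ hLamW (Submodule.smul_mem _ _ hw)
    have hQv : ∀ j : ℕ, 0 < j → Q j v = 0 := by
      intro j hj
      have hQjw : Q j w ∈ 𝒲 k := hQdeg j hj k w hw
      obtain ⟨N1, hN1⟩ := hLam w
      obtain ⟨N2, hN2⟩ := hLam (Q j w)
      set n := max (max N1 N2) j with hn
      have h1 : Lam w = ∑ i ∈ Finset.Icc 1 n, P i (Q i w) :=
        hN1 n (le_trans (le_max_left _ _) (le_max_left _ _))
      have h2 : Lam (Q j w) = ∑ i ∈ Finset.Icc 1 n, P i (Q i (Q j w)) :=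
        hN2 n (le_trans (le_max_right _ _) (le_max_left _ _))
      have key : ∀ i ∈ Finset.Icc 1 n,
          Q j (P i (Q i w)) = (if i = j then Q i w else 0) + P i (Q i (Q j w)) := by
        intro i hi
        have h1i : 1 ≤ i := (Finset.mem_Icc.mp hi).1
        have e1 := congrArg (fun f : Module.End ℚ M => f (Q i w)) (hPQ i j h1i hj)
        have e2 := congrArg (fun f : Module.End ℚ M => f w) (hQQ j i hj h1i)
        simp only [LinearMap.add_apply, Module.End.mul_apply, LinearMap.zero_apply] at e1 e2
        have e2' : Q j (Q i w) = -(Q i (Q j w)) := eq_neg_of_add_eq_zero_left e2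
        have rhs : (if i = j then (1 : Module.End ℚ M) else 0) (Q i w)
            = if i = j then Q i w else 0 := by split <;> simp
        rw [rhs] at e1
        have : Q j (P i (Q i w)) = (if i = j then Q i w else 0) - P i (Q j (Q i w)) := by
          rw [← e1]; abel
        rw [this, e2', map_neg, sub_neg_eq_add]
      have hsum : Q j (Lam w) = Q j w + Lam (Q j w) := by
        rw [h1, map_sum, Finset.sum_congr rfl key, Finset.sum_add_distrib,
          Finset.sum_ite_eq' (Finset.Icc 1 n) j (fun i => Q i w),
          if_pos (Finset.mem_Icc.mpr ⟨hj, le_trans (le_max_right _ _) le_rfl⟩), h2]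
      have hind : Lam (Q j w) = (k : ℚ) • Q j w := ih (Q j w) hQjw
      rw [hv, map_sub, map_smul, hsum, hind]
      push_cast
      rw [add_smul, one_smul]
      abel
    have hv0 : v ∈ 𝒲 0 := by
      rw [hadm2]
      simp only [Submodule.mem_iInf, LinearMap.mem_ker]
      exact hQv
    have hdisj : Disjoint (𝒲 0) (𝒲 (k + 1)) :=
      hinternal.submodule_iSupIndep.pairwiseDisjoint (Nat.succ_ne_zero k).symm
    have : v = 0 := Submodule.disjoint_def.mp hdisj v hv0 hvW
    have := sub_eq_zero.mp this
    simpa using this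
end

section
/- Let W be a graded admissible Clifford module and β a degree-0 operator on W with β|_{W₀} = 0 and [Q_l, β] = 0 for all l > 0. Then β = 0. Consequently, two degree-0 operators agreeing on W₀ and having equal commutators with all Q_l are equal. -/
/- Let W be a graded admissible module over the infinite Clifford algebra 𝓒
(generators Pᵢ, Qᵢ, i ≥ 1, with {Pᵢ,Pⱼ} = {Qᵢ,Qⱼ} = 0, {Pᵢ,Qⱼ} = δᵢⱼ; Pᵢ of
degree 1, Qᵢ of degree −1 with Qᵢ vanishing on W₀; admissibility: each vector
is killed by all Q_m with m large, and W₀ = ∩_{i>0}ker(Qᵢ)).  Then: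
(1) any degree-0 operator β with β|_{W₀} = 0 and [Q_l, β] = 0 for all l > 0
is zero; (2) consequently, two degree-0 operators agreeing on W₀ and having
equal commutators with all Q_l are equal. -/
theorem stmt19 {M : Type*} [AddCommGroup M] [Module ℚ M]
    (𝒲 : ℕ → Submodule ℚ M) (hinternal : DirectSum.IsInternal 𝒲)
    (P Q : ℕ → Module.End ℚ M)
    (hPP : ∀ i j : ℕ, 1 ≤ i → 1 ≤ j → P i * P j + P j * P i = 0)
    (hQQ : ∀ i j : ℕ, 1 ≤ i → 1 ≤ j → Q i * Q j + Q j * Q i = 0)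
    (hPQ : ∀ i j : ℕ, 1 ≤ i → 1 ≤ j →
      P i * Q j + Q j * P i = if i = j then 1 else 0)
    (hPdeg : ∀ i : ℕ, 1 ≤ i → ∀ k : ℕ, ∀ w ∈ 𝒲 k, P i w ∈ 𝒲 (k + 1))
    (hQdeg : ∀ i : ℕ, 1 ≤ i → ∀ k : ℕ, ∀ w ∈ 𝒲 (k + 1), Q i w ∈ 𝒲 k)
    (hQ0 : ∀ i : ℕ, 1 ≤ i → ∀ w ∈ 𝒲 0, Q i w = 0)
    (hadm1 : ∀ x : M, ∃ N : ℕ, ∀ m : ℕ, N < m → Q m x = 0)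
    (hadm2 : 𝒲 0 = ⨅ (i : ℕ) (_ : 0 < i), LinearMap.ker (Q i)) :
    (∀ β : Module.End ℚ M,
      (∀ k : ℕ, ∀ w ∈ 𝒲 k, β w ∈ 𝒲 k) →
      (∀ w ∈ 𝒲 0, β w = 0) →
      (∀ l : ℕ, 1 ≤ l → Q l * β - β * Q l = 0) →
      β = 0)
    ∧ (∀ α β : Module.End ℚ M,
      (∀ k : ℕ, ∀ w ∈ 𝒲 k, α w ∈ 𝒲 k) →
      (∀ k : ℕ, ∀ w ∈ 𝒲 k, β w ∈ 𝒲 k) →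
      (∀ w ∈ 𝒲 0, α w = β w) →
      (∀ l : ℕ, 1 ≤ l → Q l * α - α * Q l = Q l * β - β * Q l) →
      α = β) := by
  have key : ∀ β : Module.End ℚ M,
      (∀ k : ℕ, ∀ w ∈ 𝒲 k, β w ∈ 𝒲 k) →
      (∀ w ∈ 𝒲 0, β w = 0) →
      (∀ l : ℕ, 1 ≤ l → Q l * β - β * Q l = 0) → β = 0 := by
    intro β hdeg h0 hcomm
    have hc : ∀ l : ℕ, 1 ≤ l → ∀ x : M, Q l (β x) = β (Q l x) := by
      intro l hl x
      have h2 : Q l * β = β * Q l := sub_eq_zero.mp (hcomm l hl)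
      exact DFunLike.congr_fun h2 x
    have hk : ∀ k : ℕ, ∀ w ∈ 𝒲 k, β w = 0 := by
      intro k
      induction k with
      | zero => exact h0
      | succ k ih =>
        intro w hw
        have h1 : β w ∈ 𝒲 (k + 1) := hdeg _ w hw
        have h2 : β w ∈ 𝒲 0 := by
          rw [hadm2]
          simp only [Submodule.mem_iInf, LinearMap.mem_ker]
          intro i hi
          rw [hc i hi w]
          exact ih _ (hQdeg i hi k w hw)
        have hd : Disjoint (𝒲 0) (𝒲 (k + 1)) :=
          hinternal.submodule_iSupIndep.pairwiseDisjoint (Nat.succ_ne_zero k).symm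
        exact (Submodule.disjoint_def.mp hd) _ h2 h1
    have htop : ⊤ ≤ LinearMap.ker β := by
      rw [← hinternal.submodule_iSup_eq_top]
      exact iSup_le fun k w hw => LinearMap.mem_ker.mpr (hk k w hw)
    ext x
    exact LinearMap.mem_ker.mp (htop Submodule.mem_top)
  refine ⟨key, ?_⟩
  intro α β hαd hβd h0 hcomm
  have h := key (α - β)
    (fun k w hw => Submodule.sub_mem _ (hαd k w hw) (hβd k w hw))
    (fun w hw => by simp [h0 w hw])
    (fun l hl => by
      have hc := hcomm l hl
      have : Q l * (α - β) - (α - β) * Q l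
          = (Q l * α - α * Q l) - (Q l * β - β * Q l) := by noncomm_ring
      rw [this, hc, sub_self])
  exact sub_eq_zero.mp h
end
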